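/- The valuation (truth) function val: Formula → Bool → Bool → Bool (as an explanation under assignment enumeration) and the H_X-provability indicator are isomorphic on the paper's data set X (classes 𝕋 and ℂ) but not isomorphic on X ∪ {Peirce's law}: on X, being a classical tautology coincides with being H_X-provable, but Peirce's law is a classical tautology and not H_X-provable. -/

import Mathlib

/-- Propositional formulas over ¬ and →. -/
inductive Fm where
  | var : Nat → Fm
  | neg : Fm → Fm
  | imp : Fm → Fm → Fm
deriving DecidableEq

open Fm

/-- Classical two-valued evaluation (→ is material implication). -/
def evalB (v : Nat → Bool) : Fm → Bool
  | var n => v n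
  | neg φ => ! evalB v φ
  | imp φ ψ => !(evalB v φ) || evalB v ψ

/-- Negation of the three-valued matrix 𝔗'. -/
def gneg : Fin 3 → Fin 3 := ![1, 2, 1]

/-- Implication of the three-valued matrix 𝔗'. -/
def gimp : Fin 3 → Fin 3 → Fin 3 := ![![2, 1, 2], ![2, 2, 2], ![0, 1, 2]]

/-- Evaluation in the three-valued matrix 𝔗'. -/
def eval3 (v : Nat → Fin 3) : Fm → Fin 3
  | var n => v n
  | neg φ => gneg (eval3 v φ)
  | imp φ ψ => gimp (eval3 v φ) (eval3 v ψ)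

/-- Uniform substitution of formulas for variables. -/
def subst (s : Nat → Fm) : Fm → Fm
  | var n => s n
  | neg φ => neg (subst s φ)
  | imp φ ψ => imp (subst s φ) (subst s ψ)

/-- Provability in the Hilbert system H_X: axiom schemas X1–X4,
    closed under modus ponens and uniform substitution. -/
inductive Prov : Fm → Prop where
  | x1 : Prov (imp (var 0) (imp (var 1) (var 0)))
  | x2 : Prov (imp (imp (var 0) (imp (var 1) (var 2)))
           (imp (imp (var 0) (var 1)) (imp (var 0) (var 2))))
  | x3 : Prov (imp (neg (var 0)) (imp (var 0) (var 1)))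
  | x4 : Prov (imp (imp (var 0) (neg (var 0))) (neg (var 0)))
  | mp {φ ψ : Fm} : Prov (imp φ ψ) → Prov φ → Prov ψ
  | sub {φ : Fm} (s : Nat → Fm) : Prov φ → Prov (subst s φ)

/-- Peirce's law ((p → q) → p) → p. -/
def peirceFm : Fm := imp (imp (imp (var 0) (var 1)) (var 0)) (var 0)

open Fm

/-- Class 𝕋 of the paper's data set. -/
def classT : List Fm :=
  [ imp (var 0) (imp (var 1) (var 0)),
    imp (imp (var 0) (imp (var 1) (var 2)))
      (imp (imp (var 0) (var 1)) (imp (var 0) (var 2))),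
    imp (neg (var 0)) (imp (var 0) (var 1)),
    imp (imp (var 0) (neg (var 0))) (neg (var 0)),
    imp (var 0) (neg (neg (var 0))),
    imp (neg (neg (neg (neg (var 0))))) (neg (neg (var 0))),
    neg (neg (imp (neg (neg (neg (neg (var 0))))) (neg (neg (var 0))))),
    imp (imp (var 0) (var 1)) (imp (neg (var 1)) (neg (var 0))),
    imp (imp (var 0) (neg (var 1))) (imp (var 1) (neg (var 0))),
    neg (imp (imp (neg (var 0)) (neg (var 0))) (neg (imp (var 1) (neg (neg (var 1)))))),
    neg (neg (imp (imp (imp (var 0) (var 1)) (var 0)) (var 0))) ]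

/-- Class ℂ of the paper's data set. -/
def classC : List Fm :=
  [ neg (imp (var 0) (imp (var 1) (var 0))),
    neg (imp (imp (var 0) (imp (var 1) (var 2)))
      (imp (imp (var 0) (var 1)) (imp (var 0) (var 2)))),
    neg (imp (neg (var 0)) (imp (var 0) (var 1))),
    neg (imp (imp (var 0) (neg (var 0))) (neg (var 0))),
    neg (imp (var 0) (neg (neg (var 0)))),
    neg (imp (neg (neg (neg (neg (var 0))))) (neg (neg (var 0)))),
    neg (neg (neg (imp (neg (neg (neg (neg (var 0))))) (neg (neg (var 0)))))),
    neg (imp (imp (var 0) (var 1)) (imp (neg (var 1)) (neg (var 0)))),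
    neg (imp (imp (var 0) (neg (var 1))) (imp (var 1) (neg (var 0)))),
    imp (imp (neg (var 0)) (neg (var 0))) (neg (imp (var 1) (neg (neg (var 1))))),
    neg (imp (imp (imp (var 0) (var 1)) (var 0)) (var 0)) ]

/-- Explanations f₁ : U → Y₁ and f₂ : U → Y₂ are isomorphic on X ⊆ U:
there is a bijection g between the images f₁(X) and f₂(X) with
f₂(x) = g(f₁(x)) for all x ∈ X. -/
def IsoOn {U Y₁ Y₂ : Type*} (f₁ : U → Y₁) (f₂ : U → Y₂) (X : Set U) : Prop :=
  ∃ g : Y₁ → Y₂, Set.BijOn g (f₁ '' X) (f₂ '' X) ∧ ∀ x ∈ X, f₂ x = g (f₁ x)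

/-- The classical truth function of a formula, as an explanation. -/
def truthFn (φ : Fm) : (Nat → Bool) → Bool := fun v => evalB v φ

/-- The H_X-provability indicator, as an explanation. -/
def provInd (φ : Fm) : Prop := Prov φ

/-- The paper's data set: classes 𝕋 and ℂ. -/
def dataSet : Set Fm := {φ | φ ∈ classT ∨ φ ∈ classC}

/-
On the data set, every formula of 𝕋 has an H_X-derivation (built with a deduction theorem
for hypotheses that are not substituted into) and every formula of ℂ takes an undesignated
value in the three-valued matrix 𝔗', which validates X1–X4 and is closed under modus ponens
and substitution. So on 𝕋 ∪ ℂ both explanations split the data into the same two blocks,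
tautologies and contradictions. Peirce's law has the same (constant true) truth function as
X1, but gets value 0 in 𝔗' at p = 0, q = 1, so it lies in X1's truth-block and not in its
provability-block.
-/

section IsoOn

variable {U Y₁ Y₂ : Type*} {f₁ : U → Y₁} {f₂ : U → Y₂} {X : Set U}

theorem isoOn_iff [Nonempty Y₂] :
    IsoOn f₁ f₂ X ↔ ∀ x ∈ X, ∀ y ∈ X, f₁ x = f₁ y ↔ f₂ x = f₂ y := by
  constructor
  · rintro ⟨g, hbij, hg⟩ x hx y hy
    refine ⟨fun h => by rw [hg x hx, hg y hy, h], fun h => ?_⟩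
    refine hbij.injOn (Set.mem_image_of_mem f₁ hx) (Set.mem_image_of_mem f₁ hy) ?_
    rw [← hg x hx, ← hg y hy, h]
  · intro h
    have hfac : (X.domRestrict f₂).FactorsThrough (X.domRestrict f₁) :=
      fun x y hxy => (h x x.2 y y.2).1 hxy
    set g :=
      Function.extend (X.domRestrict f₁) (X.domRestrict f₂) fun _ => Classical.arbitrary Y₂
    have hg : ∀ x ∈ X, g (f₁ x) = f₂ x := fun x hx => hfac.extend_apply _ ⟨x, hx⟩
    refine ⟨g, ⟨?_, ?_, ?_⟩, fun x hx => (hg x hx).symm⟩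
    · rintro _ ⟨x, hx, rfl⟩
      exact ⟨x, hx, (hg x hx).symm⟩
    · rintro _ ⟨x, hx, rfl⟩ _ ⟨y, hy, rfl⟩ hxy
      exact (h x hx y hy).2 (by rwa [hg x hx, hg y hy] at hxy)
    · rintro _ ⟨x, hx, rfl⟩
      exact ⟨f₁ x, ⟨x, hx, rfl⟩, hg x hx⟩

end IsoOn

def substOfThree (A B C : Fm) : Nat → Fm
  | 0 => A
  | 1 => B
  | _ => C

namespace Prov

theorem axX1 (A B : Fm) : Prov (imp A (imp B A)) := .sub (substOfThree A B A) .x1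

theorem axX2 (A B C : Fm) : Prov (imp (imp A (imp B C)) (imp (imp A B) (imp A C))) :=
  .sub (substOfThree A B C) .x2

theorem axX3 (A B : Fm) : Prov (imp (neg A) (imp A B)) := .sub (substOfThree A B A) .x3

theorem axX4 (A : Fm) : Prov (imp (imp A (neg A)) (neg A)) := .sub (substOfThree A A A) .x4

theorem imp_self (A : Fm) : Prov (imp A A) :=
  ((axX2 A (imp A A) A).mp (axX1 A (imp A A))).mp (axX1 A A)

end Prov

-- Substitution is not applied to hypotheses; this is what makes the deduction theorem hold.
inductive Derives (Γ : List Fm) : Fm → Prop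
  | hyp {φ : Fm} : φ ∈ Γ → Derives Γ φ
  | prov {φ : Fm} : Prov φ → Derives Γ φ
  | mp {φ ψ : Fm} : Derives Γ (imp φ ψ) → Derives Γ φ → Derives Γ ψ

namespace Derives

variable {Γ : List Fm}

theorem imp_intro {A B : Fm} (h : Derives (A :: Γ) B) : Derives Γ (imp A B) := by
  induction h with
  | @hyp φ hφ =>
    rcases List.mem_cons.mp hφ with rfl | hφ
    · exact .prov (Prov.imp_self φ)
    · exact .mp (.prov (Prov.axX1 φ A)) (.hyp hφ)
  | @prov φ hφ => exact .mp (.prov (Prov.axX1 φ A)) (.prov hφ)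
  | @mp φ ψ _ _ ihφψ ihφ => exact .mp (.mp (.prov (Prov.axX2 A φ ψ)) ihφψ) ihφ

theorem imp_trans {A B C : Fm} (hAB : Derives Γ (imp A B)) (hBC : Derives Γ (imp B C)) :
    Derives Γ (imp A C) :=
  .mp (.mp (.prov (Prov.axX2 A B C)) (.mp (.prov (Prov.axX1 (imp B C) A)) hBC)) hAB

theorem prov_of_nil {φ : Fm} (h : Derives [] φ) : Prov φ := by
  induction h with
  | hyp h => simp at h
  | prov h => exact h
  | mp _ _ ihφψ ihφ => exact ihφψ.mp ihφ

end Derives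

namespace Prov

open Derives

theorem imp_neg_neg (A : Fm) : Prov (imp A (neg (neg A))) :=
  prov_of_nil <| imp_intro <| .mp (.prov (axX4 (neg A))) <| imp_intro <|
    .mp (.mp (.prov (axX3 A (neg (neg A)))) (.hyp (by simp))) (.hyp (by simp))

theorem contrapos (A B : Fm) : Prov (imp (imp A B) (imp (neg B) (neg A))) := by
  refine prov_of_nil <| imp_intro <| imp_intro <| .mp (.prov (axX4 A)) ?_
  exact imp_trans (.hyp (by simp)) (.mp (.prov (axX3 B (neg A))) (.hyp (by simp)))

theorem neg_neg_neg_imp_neg (A : Fm) : Prov (imp (neg (neg (neg A))) (neg A)) :=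
  (contrapos A (neg (neg A))).mp (imp_neg_neg A)

theorem imp_neg_comm (A B : Fm) : Prov (imp (imp A (neg B)) (imp B (neg A))) := by
  refine prov_of_nil <| imp_intro <| imp_intro <| .mp (.prov (axX4 A)) ?_
  have hnnB : Derives [B, imp A (neg B)] (neg (neg B)) :=
    .mp (.prov (imp_neg_neg B)) (.hyp (by simp))
  exact imp_trans (.hyp (by simp)) (.mp (.prov (axX3 (neg B) (neg A))) hnnB)

theorem neg_imp_neg {A B : Fm} (hA : Prov A) (hB : Prov B) : Prov (neg (imp A (neg B))) := by
  refine (axX4 (imp A (neg B))).mp <| prov_of_nil <| imp_intro ?_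
  have hnB : Derives [imp A (neg B)] (neg B) := .mp (.hyp (by simp)) (.prov hA)
  exact .mp (.mp (.prov (axX3 (neg B) _)) (.prov ((imp_neg_neg B).mp hB))) hnB

-- From `¬P` get `¬p` (as `p → P`), hence `p → q`, hence `p`: so `¬P ⊢ P`,
-- and `X3`, `X4` give `¬¬P`.
theorem neg_neg_peirceFm : Prov (neg (neg peirceFm)) := by
  refine (axX4 (neg peirceFm)).mp <| prov_of_nil <| imp_intro ?_
  have hpP : Prov (imp (var 0) peirceFm) :=
    prov_of_nil <| imp_intro <| imp_intro <| .hyp (by simp)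
  have hP : Derives [neg peirceFm] peirceFm := by
    refine imp_intro ?_
    have hnp : Derives [imp (imp (var 0) (var 1)) (var 0), neg peirceFm] (neg (var 0)) :=
      .mp (.prov ((contrapos _ _).mp hpP)) (.hyp (by simp))
    exact .mp (.hyp (by simp)) (.mp (.prov (axX3 _ (var 1))) hnp)
  exact .mp (.mp (.prov (axX3 peirceFm _)) (.hyp (by simp))) hP

end Prov

theorem prov_of_mem_classT {φ : Fm} (hφ : φ ∈ classT) : Prov φ := by
  simp only [classT, List.mem_cons, List.not_mem_nil, or_false] at hφ
  rcases hφ with rfl | rfl | rfl | rfl | rfl | rfl | rfl | rfl | rfl | rfl | rfl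
  · exact .x1
  · exact .x2
  · exact .x3
  · exact .x4
  · exact .imp_neg_neg _
  · exact .neg_neg_neg_imp_neg _
  · exact (Prov.imp_neg_neg _).mp (.neg_neg_neg_imp_neg _)
  · exact .contrapos _ _
  · exact .imp_neg_comm _ _
  · exact .neg_imp_neg (.imp_self _) (.imp_neg_neg _)
  · exact .neg_neg_peirceFm

theorem eval3_subst (v : Nat → Fin 3) (s : Nat → Fm) (φ : Fm) :
    eval3 v (subst s φ) = eval3 (fun n => eval3 v (s n)) φ := by
  induction φ with
  | var n => rfl
  | neg φ ih => simp only [subst, eval3, ih]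
  | imp φ ψ ihφ ihψ => simp only [subst, eval3, ihφ, ihψ]

theorem Prov.eval3_eq_two {φ : Fm} (h : Prov φ) (v : Nat → Fin 3) : eval3 v φ = 2 := by
  induction h generalizing v with
  | x1 => exact (by decide : ∀ a b : Fin 3, gimp a (gimp b a) = 2) (v 0) (v 1)
  | x2 =>
    exact (by decide : ∀ a b c : Fin 3,
      gimp (gimp a (gimp b c)) (gimp (gimp a b) (gimp a c)) = 2) (v 0) (v 1) (v 2)
  | x3 => exact (by decide : ∀ a b : Fin 3, gimp (gneg a) (gimp a b) = 2) (v 0) (v 1)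
  | x4 => exact (by decide : ∀ a : Fin 3, gimp (gimp a (gneg a)) (gneg a) = 2) (v 0)
  | mp _ _ ihφψ ihφ =>
    exact (by decide : ∀ a b : Fin 3, gimp a b = 2 → a = 2 → b = 2) _ _ (ihφψ v) (ihφ v)
  | sub s _ ih => rw [eval3_subst]; exact ih _

theorem not_prov_of_mem_classC {φ : Fm} (hφ : φ ∈ classC) : ¬ Prov φ := fun h =>
  (by decide : ∀ ψ ∈ classC, eval3 (fun _ => 0) ψ ≠ 2) φ hφ (h.eval3_eq_two _)

theorem not_prov_peirceFm : ¬ Prov peirceFm := fun h =>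
  (by decide : eval3 (fun n => if n = 0 then 0 else 1) peirceFm ≠ 2) (h.eval3_eq_two _)

theorem truthFn_of_mem_classT {φ : Fm} (hφ : φ ∈ classT) : truthFn φ = fun _ => true := by
  simp only [classT, List.mem_cons, List.not_mem_nil, or_false] at hφ
  funext v
  rcases hφ with rfl | rfl | rfl | rfl | rfl | rfl | rfl | rfl | rfl | rfl | rfl <;>
    cases h0 : v 0 <;> cases h1 : v 1 <;> cases h2 : v 2 <;>
      simp [truthFn, evalB, h0, h1, h2]

theorem truthFn_of_mem_classC {φ : Fm} (hφ : φ ∈ classC) : truthFn φ = fun _ => false := by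
  simp only [classC, List.mem_cons, List.not_mem_nil, or_false] at hφ
  funext v
  rcases hφ with rfl | rfl | rfl | rfl | rfl | rfl | rfl | rfl | rfl | rfl | rfl <;>
    cases h0 : v 0 <;> cases h1 : v 1 <;> cases h2 : v 2 <;>
      simp [truthFn, evalB, h0, h1, h2]

theorem truthFn_peirceFm : truthFn peirceFm = fun _ => true := by
  funext v
  cases h0 : v 0 <;> cases h1 : v 1 <;> simp [truthFn, peirceFm, evalB, h0, h1]

theorem truthFn_and_prov_of_mem_dataSet {φ : Fm} (hφ : φ ∈ dataSet) :
    (truthFn φ = (fun _ => true) ∧ Prov φ) ∨ (truthFn φ = (fun _ => false) ∧ ¬ Prov φ) :=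
  hφ.imp (fun h => ⟨truthFn_of_mem_classT h, prov_of_mem_classT h⟩)
    (fun h => ⟨truthFn_of_mem_classC h, not_prov_of_mem_classC h⟩)

theorem truth_prov_iso_on_data_not_on_peirce :
    IsoOn truthFn provInd dataSet ∧
    ¬ IsoOn truthFn provInd (dataSet ∪ {peirceFm}) := by
  constructor
  · refine isoOn_iff.mpr fun φ hφ ψ hψ => ?_
    rcases truthFn_and_prov_of_mem_dataSet hφ with ⟨hφ₁, hφ₂⟩ | ⟨hφ₁, hφ₂⟩ <;>
      rcases truthFn_and_prov_of_mem_dataSet hψ with ⟨hψ₁, hψ₂⟩ | ⟨hψ₁, hψ₂⟩ <;>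
      simp [provInd, hφ₁, hφ₂, hψ₁, hψ₂, funext_iff]
  · intro hiso
    have hX1 : imp (var 0) (imp (var 1) (var 0)) ∈ classT := by simp [classT]
    have hprov : provInd (imp (var 0) (imp (var 1) (var 0))) = provInd peirceFm :=
      (isoOn_iff.mp hiso _ (Or.inl (Or.inl hX1)) _ (Or.inr rfl)).mp
        (by rw [truthFn_of_mem_classT hX1, truthFn_peirceFm])
    exact not_prov_peirceFm (cast hprov Prov.x1)
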